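/- Fix an integer m ≥ 2. The set of real numbers x in [−1,0) whose minus ('backward') continued fraction expansion x = (0, n₁, n₂, …) with all n_k ≥ 2 satisfies n_k ∈ {m, m+1} for all k ≥ 1 has Lebesgue measure zero. -/

import Mathlib

/-!
Lebesgue density. Points whose digits are eventually all `m` form a countable set. Any other
point `x` of the set has infinitely many digits `m + 1 ≥ 3`, and right after such a digit its
cylinder `J` (of length `r`, containing `x`) has `q_K ≤ 3 (q_K - q_{K-1})`. Up to rational
endpoints, the set meets `J` only inside the two sub-cylinders with next digit `m` or `m + 1`,
whose lengths add up to at most `8 r / 9`. So the set fills at most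
`(8 r / 9 + r) / (2 r) = 17 / 18` of the ball of radius `r` about `x`, for arbitrarily small `r`,
and by the density theorem it is null.
-/

open Filter Topology MeasureTheory

/-- Numerators: `pfun n (k+2) = p_k`, `p_{-2}=0`, `p_{-1}=1`, `p_k = n_k p_{k-1} - p_{k-2}`. -/
def pfun (n : ℕ → ℤ) : ℕ → ℤ
  | 0 => 0
  | 1 => 1
  | k + 2 => n k * pfun n (k + 1) - pfun n k

/-- Denominators: `qfun n (k+2) = q_k`, `q_{-2}=-1`, `q_{-1}=0`, `q_k = n_k q_{k-1} - q_{k-2}`. -/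
def qfun (n : ℕ → ℤ) : ℕ → ℤ
  | 0 => -1
  | 1 => 0
  | k + 2 => n k * qfun n (k + 1) - qfun n k

/-- Prepend the digit `0` to a digit sequence, giving the digit sequence of `(0, n₁, n₂, …)`. -/
def prep (n : ℕ → ℤ) : ℕ → ℤ
  | 0 => 0
  | i + 1 => n i

/-- `x` has the minus continued fraction expansion `(0, n₁, n₂, …)`, in the sense that
the convergents tend to `x`. -/
def IsMinusCF (x : ℝ) (n : ℕ → ℤ) : Prop :=
  Tendsto (fun k : ℕ =>
      (pfun (prep n) (k + 2) : ℝ) / (qfun (prep n) (k + 2) : ℝ)) atTop (𝓝 x)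

theorem measure_eq_zero_of_frequently_density_le {β : Type*} [MetricSpace β] [MeasurableSpace β]
    [BorelSpace β] [SecondCountableTopology β] [HasBesicovitchCovering β] (μ : Measure β)
    [IsLocallyFiniteMeasure μ] {s t : Set β} (hst : s ⊆ t) {c : ENNReal} (hc : c < 1)
    (h : ∀ x ∈ s, ∃ᶠ r in 𝓝[>] 0,
      μ (t ∩ Metric.closedBall x r) / μ (Metric.closedBall x r) ≤ c) :
    μ s = 0 := by
  have hae := ae_iff.mp (Besicovitch.ae_tendsto_measure_inter_div μ s)
  rw [← Measure.restrict_apply_self]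
  refine measure_mono_null (fun x hx => ?_) hae
  intro htend
  obtain ⟨r, hr_le, hr_lt⟩ := ((h x hx).and_eventually (htend.eventually (lt_mem_nhds hc))).exists
  exact (hr_lt.trans_le (ENNReal.div_le_div_right
    (measure_mono (Set.inter_subset_inter_left _ hst)) _)).not_ge hr_le

lemma countable_setOf_eventually_eq {α : Type*} [Countable α] (a : α) :
    {f : ℕ → α | ∀ᶠ k in atTop, f k = a}.Countable := by
  refine (Set.countable_iUnion fun K => ?_).mono
    fun f hf => Set.mem_iUnion.mpr (eventually_atTop.mp hf)
  refine (Set.mapsTo_univ (fun (f : ℕ → α) (i : Fin K) => f i) {f | ∀ k ≥ K, f k = a}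
    ).countable_of_injOn (fun f hf g hg hfg => funext fun k => ?_) Set.countable_univ
  by_cases hk : k < K
  · exact congrFun hfg ⟨k, hk⟩
  · rw [hf k (not_lt.mp hk), hg k (not_lt.mp hk)]

lemma countable_setOf_isMinusCF {S : Set (ℕ → ℤ)} (hS : S.Countable) :
    {x : ℝ | ∃ n ∈ S, IsMinusCF x n}.Countable := by
  refine (hS.biUnion fun n _ => Set.Subsingleton.countable (s := {x : ℝ | IsMinusCF x n}) ?_).mono
    fun x ⟨n, hn, hx⟩ => Set.mem_biUnion hn hx
  exact fun _ hx _ hy => tendsto_nhds_unique hx hy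

/-- For `a = q_K`, `b = q_{K-1}` the left side is the total length of the cylinders with next digit
`μ` and `μ + 1` inside a cylinder of length `1 / ((a - b) * a)`. -/
lemma child_lengths_sum_le {a b μ : ℝ} (hb : 0 ≤ b) (hba : b < a) (h3 : a ≤ 3 * (a - b))
    (hμ : 2 ≤ μ) :
    1 / ((μ * a - b - a) * (μ * a - b)) + 1 / (((μ + 1) * a - b - a) * ((μ + 1) * a - b)) ≤
      8 / 9 * (1 / ((a - b) * a)) := by
  have ha : 0 < a := hb.trans_lt hba
  have hab : 0 < a - b := by linarith
  have hX : a - b ≤ μ * a - b - a := by nlinarith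
  have hY : 0 < μ * a - b := by nlinarith
  have hZ : 3 * a - b ≤ (μ + 1) * a - b := by nlinarith
  have hXY := mul_pos (hab.trans_le hX) hY
  have hYZ : 0 < ((μ + 1) * a - b - a) * ((μ + 1) * a - b) := mul_pos (by linarith) (by linarith)
  have hXZ : 0 < (μ * a - b - a) * ((μ + 1) * a - b) := mul_pos (by linarith) (by linarith)
  have hab3 : 0 < (a - b) * (3 * a - b) := mul_pos hab (by linarith)
  calc 1 / ((μ * a - b - a) * (μ * a - b)) + 1 / (((μ + 1) * a - b - a) * ((μ + 1) * a - b))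
      = 2 / ((μ * a - b - a) * ((μ + 1) * a - b)) := by
        rw [div_add_div _ _ hXY.ne' hYZ.ne', div_eq_div_iff (mul_pos hXY hYZ).ne' hXZ.ne']
        ring
    _ ≤ 2 / ((a - b) * (3 * a - b)) := by gcongr <;> linarith
    _ ≤ 8 / 9 * (1 / ((a - b) * a)) := by
        rw [mul_one_div, div_le_div_iff₀ hab3 (mul_pos hab ha)]
        nlinarith

namespace MinusCF

/-- `den n k` is `q_{k-1}`, the denominator of the convergent with the digits `n 0, …, n (k-2)`. -/
def den (n : ℕ → ℤ) (k : ℕ) : ℤ := qfun (prep n) (k + 1)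

def num (n : ℕ → ℤ) (k : ℕ) : ℤ := pfun (prep n) (k + 1)

@[simp] lemma den_zero (n : ℕ → ℤ) : den n 0 = 0 := rfl
@[simp] lemma den_one (n : ℕ → ℤ) : den n 1 = 1 := by simp [den, qfun, prep]
@[simp] lemma num_zero (n : ℕ → ℤ) : num n 0 = 1 := rfl
@[simp] lemma num_one (n : ℕ → ℤ) : num n 1 = 0 := by simp [num, pfun, prep]

lemma den_add_two (n : ℕ → ℤ) (k : ℕ) : den n (k + 2) = n k * den n (k + 1) - den n k := rfl

lemma num_add_two (n : ℕ → ℤ) (k : ℕ) : num n (k + 2) = n k * num n (k + 1) - num n k := rfl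

lemma num_mul_den_sub_num_mul_den (n : ℕ → ℤ) (k : ℕ) :
    num n k * den n (k + 1) - num n (k + 1) * den n k = 1 := by
  induction k with
  | zero => simp
  | succ k ih => rw [den_add_two, num_add_two]; linear_combination ih

lemma den_eq_and_num_eq_of_forall_lt {n n' : ℕ → ℤ} {k : ℕ} (h : ∀ i < k, n i = n' i) :
    ∀ j ≤ k + 1, den n j = den n' j ∧ num n j = num n' j
  | 0, _ => ⟨rfl, rfl⟩
  | 1, _ => by simp
  | j + 2, hj => by
    obtain ⟨hd₁, hn₁⟩ := den_eq_and_num_eq_of_forall_lt h (j + 1) (by omega)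
    obtain ⟨hd₀, hn₀⟩ := den_eq_and_num_eq_of_forall_lt h j (by omega)
    simp only [den_add_two, num_add_two, h j (by omega), hd₁, hn₁, hd₀, hn₀, and_self]

noncomputable def conv (n : ℕ → ℤ) (k : ℕ) : ℝ := (num n (k + 1) : ℝ) / den n (k + 1)

noncomputable def lower (n : ℕ → ℤ) (k : ℕ) : ℝ :=
  ((num n (k + 1) : ℝ) - num n k) / ((den n (k + 1) : ℝ) - den n k)

/-- The cylinder of the digits `n 0, …, n (k-1)`: the points `(p_k - p_{k-1} t) / (q_k - q_{k-1} t)`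
for tails `t ∈ [0, 1]`. -/
def cyl (n : ℕ → ℤ) (k : ℕ) : Set ℝ := Set.Icc (lower n k) (conv n k)

section Prefix

variable {n n' : ℕ → ℤ} {k : ℕ}

lemma cyl_congr (h : ∀ i < k, n i = n' i) : cyl n k = cyl n' k := by
  obtain ⟨hd₁, hn₁⟩ := den_eq_and_num_eq_of_forall_lt h (k + 1) le_rfl
  obtain ⟨hd₀, hn₀⟩ := den_eq_and_num_eq_of_forall_lt h k (by omega)
  rw [cyl, cyl, conv, conv, lower, lower, hd₁, hn₁, hd₀, hn₀]

lemma lower_eq_conv_of_succ (h : ∀ i < k, n i = n' i) (hk : n' k = n k + 1) :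
    lower n' (k + 1) = conv n (k + 1) := by
  obtain ⟨hd₁, hn₁⟩ := den_eq_and_num_eq_of_forall_lt h (k + 1) le_rfl
  obtain ⟨hd₀, hn₀⟩ := den_eq_and_num_eq_of_forall_lt h k (by omega)
  rw [lower, conv, den_add_two, num_add_two, den_add_two, num_add_two, hk, hd₁, hn₁, hd₀, hn₀]
  push_cast
  ring

lemma eq_conv_of_mem_cyl_of_mem_cyl (h : ∀ i < k, n i = n' i) (hk : n' k = n k + 1) {y : ℝ}
    (hy : y ∈ cyl n (k + 1)) (hy' : y ∈ cyl n' (k + 1)) : y = conv n (k + 1) :=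
  le_antisymm hy.2 (lower_eq_conv_of_succ h hk ▸ hy'.1)

end Prefix

lemma conv_mem_range_ratCast (n : ℕ → ℤ) (k : ℕ) : conv n k ∈ Set.range ((↑) : ℚ → ℝ) :=
  ⟨num n (k + 1) / den n (k + 1), by push_cast; rfl⟩

section TwoLeDigits

variable {n : ℕ → ℤ} (h2 : ∀ k, 2 ≤ n k)
include h2

lemma strictMono_den : StrictMono (den n) := by
  suffices h : ∀ k, 0 ≤ den n k ∧ den n k < den n (k + 1) from
    strictMono_nat_of_lt_succ fun k => (h k).2
  intro k
  induction k with
  | zero => simp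
  | succ k ih =>
    refine ⟨ih.1.trans ih.2.le, ?_⟩
    rw [den_add_two]
    nlinarith [h2 k]

lemma den_nonneg (k : ℕ) : 0 ≤ den n k := by
  simpa using (strictMono_den h2).monotone (Nat.zero_le k)

lemma le_den (k : ℕ) : (k : ℤ) ≤ den n k := by
  induction k with
  | zero => simp
  | succ k ih => have := strictMono_den h2 (Nat.lt_add_one k); push_cast; omega

lemma den_le_three_mul_den_sub_den {k : ℕ} (hk : 3 ≤ n k) :
    den n (k + 2) ≤ 3 * (den n (k + 2) - den n (k + 1)) := by
  have := den_nonneg h2 k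
  have := strictMono_den h2 (Nat.lt_add_one k)
  rw [den_add_two]
  nlinarith

lemma den_succ_pos (k : ℕ) : (0 : ℝ) < den n (k + 1) := by
  exact_mod_cast (den_nonneg h2 k).trans_lt (strictMono_den h2 (Nat.lt_add_one k))

lemma den_succ_sub_den_pos (k : ℕ) : (0 : ℝ) < (den n (k + 1) : ℝ) - den n k := by
  exact_mod_cast sub_pos.mpr (strictMono_den h2 (Nat.lt_add_one k))

lemma conv_succ_le_conv (k : ℕ) : conv n (k + 1) ≤ conv n k := by
  have hdet := num_mul_den_sub_num_mul_den n (k + 1)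
  rw [conv, conv, div_le_div_iff₀ (den_succ_pos h2 _) (den_succ_pos h2 _)]
  exact_mod_cast (by linarith : num n (k + 2) * den n (k + 1) ≤ num n (k + 1) * den n (k + 2))

lemma lower_le_lower_succ (k : ℕ) : lower n k ≤ lower n (k + 1) := by
  have hdet := num_mul_den_sub_num_mul_den n k
  rw [lower, lower, div_le_div_iff₀ (den_succ_sub_den_pos h2 _) (den_succ_sub_den_pos h2 _)]
  have key : (num n (k + 1) - num n k) * (den n (k + 2) - den n (k + 1)) ≤
      (num n (k + 2) - num n (k + 1)) * (den n (k + 1) - den n k) := by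
    rw [den_add_two, num_add_two]
    nlinarith [h2 k]
  exact_mod_cast key

lemma conv_sub_lower (k : ℕ) :
    conv n k - lower n k = 1 / (((den n (k + 1) : ℝ) - den n k) * den n (k + 1)) := by
  have hdet : (num n k : ℝ) * den n (k + 1) - num n (k + 1) * den n k = 1 := by
    exact_mod_cast num_mul_den_sub_num_mul_den n k
  have := den_succ_pos h2 k
  have := den_succ_sub_den_pos h2 k
  rw [conv, lower, div_sub_div _ _ (by positivity) (by positivity)]
  congr 1
  · linear_combination hdet
  · ring

lemma conv_sub_lower_pos (k : ℕ) : 0 < conv n k - lower n k := by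
  have := den_succ_pos h2 k
  have := den_succ_sub_den_pos h2 k
  rw [conv_sub_lower h2]
  positivity

lemma antitone_cyl : Antitone (cyl n) :=
  antitone_nat_of_succ_le fun k =>
    Set.Icc_subset_Icc (lower_le_lower_succ h2 k) (conv_succ_le_conv h2 k)

lemma mem_cyl_of_isMinusCF {x : ℝ} (hx : IsMinusCF x n) (k : ℕ) : x ∈ cyl n k := by
  refine isClosed_Icc.mem_of_tendsto (hx : Tendsto (conv n) atTop (𝓝 x)) ?_
  filter_upwards [eventually_ge_atTop k] with j hj
  exact antitone_cyl h2 hj ⟨(sub_pos.mp (conv_sub_lower_pos h2 j)).le, le_rfl⟩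

lemma tendsto_conv_sub_lower : Tendsto (fun k => conv n k - lower n k) atTop (𝓝[>] 0) := by
  refine tendsto_nhdsWithin_iff.mpr ⟨?_, .of_forall (conv_sub_lower_pos h2)⟩
  refine squeeze_zero (fun k => (conv_sub_lower_pos h2 k).le) (fun k => ?_)
    tendsto_one_div_add_atTop_nhds_zero_nat
  have hgap : (1 : ℝ) ≤ (den n (k + 1) : ℝ) - den n k := by
    exact_mod_cast sub_pos.mpr (strictMono_den h2 (Nat.lt_add_one k))
  have hden : (k : ℝ) + 1 ≤ den n (k + 1) := by exact_mod_cast le_den h2 (k + 1)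
  rw [conv_sub_lower h2]
  gcongr
  nlinarith

end TwoLeDigits

def twoDigitSet (m : ℤ) : Set ℝ :=
  {x | ∃ n : ℕ → ℤ, (∀ k, n k = m ∨ n k = m + 1) ∧ IsMinusCF x n}

section TwoDigits

variable {m : ℤ} (hm : 2 ≤ m)
include hm

lemma two_le_of_forall_eq_or_eq {n : ℕ → ℤ} (hn : ∀ k, n k = m ∨ n k = m + 1) (k : ℕ) :
    2 ≤ n k := by
  rcases hn k with h | h <;> omega

/-- A point of `cyl n K` in neither child cylinder is the common endpoint of two sibling
cylinders, hence a convergent, hence rational. -/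
lemma twoDigitSet_inter_cyl_subset {n : ℕ → ℤ} (hn : ∀ k, n k = m ∨ n k = m + 1) (K : ℕ) :
    twoDigitSet m ∩ cyl n K ⊆
      (cyl (Function.update n K m) (K + 1) ∪ cyl (Function.update n K (m + 1)) (K + 1)) ∪
        Set.range ((↑) : ℚ → ℝ) := by
  rintro y ⟨⟨n', hn', hy⟩, hyK⟩
  have h2' := two_le_of_forall_eq_or_eq hm hn'
  by_cases hpre : ∀ i < K, n i = n' i
  · have hcyl : cyl (Function.update n K (n' K)) (K + 1) = cyl n' (K + 1) := by
      refine cyl_congr fun i hi => ?_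
      rcases (Nat.lt_succ_iff.mp hi).lt_or_eq with hiK | rfl
      · rw [Function.update_of_ne hiK.ne, hpre i hiK]
      · rw [Function.update_self]
    have hy' : y ∈ cyl (Function.update n K (n' K)) (K + 1) := by
      rw [hcyl]; exact mem_cyl_of_isMinusCF h2' hy (K + 1)
    left
    rcases hn' K with h | h <;> rw [h] at hy'
    exacts [Or.inl hy', Or.inr hy']
  · classical
    push Not at hpre
    obtain ⟨hjK, hne⟩ := Nat.find_spec hpre
    set j := Nat.find hpre
    have hagree : ∀ i < j, n i = n' i := fun i hi => by
      by_contra hne'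
      exact Nat.find_min hpre hi ⟨hi.trans hjK, hne'⟩
    have hy₁ : y ∈ cyl n (j + 1) := antitone_cyl (two_le_of_forall_eq_or_eq hm hn) hjK hyK
    have hy₂ : y ∈ cyl n' (j + 1) := mem_cyl_of_isMinusCF h2' hy (j + 1)
    right
    rcases hn j with h | h <;> rcases hn' j with h' | h'
    · exact absurd (h.trans h'.symm) hne
    · rw [eq_conv_of_mem_cyl_of_mem_cyl hagree (by omega) hy₁ hy₂]
      exact conv_mem_range_ratCast n _
    · rw [eq_conv_of_mem_cyl_of_mem_cyl (fun i hi => (hagree i hi).symm) (by omega) hy₂ hy₁]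
      exact conv_mem_range_ratCast n' _
    · exact absurd (h.trans h'.symm) hne

lemma volume_twoDigitSet_inter_cyl_le {n : ℕ → ℤ} (hn : ∀ k, n k = m ∨ n k = m + 1) {K : ℕ}
    (hK : den n (K + 1) ≤ 3 * (den n (K + 1) - den n K)) :
    volume (twoDigitSet m ∩ cyl n K) ≤ ENNReal.ofReal (8 / 9 * (conv n K - lower n K)) := by
  have h2 := two_le_of_forall_eq_or_eq hm hn
  have hlen (c : ℤ) (hc : 2 ≤ c) : volume (cyl (Function.update n K c) (K + 1)) =
      ENNReal.ofReal (1 / ((c * den n (K + 1) - den n K - den n (K + 1)) *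
        (c * den n (K + 1) - den n K))) := by
    have hpre : ∀ i < K, n i = Function.update n K c i := fun i hi =>
      (Function.update_of_ne hi.ne _ _).symm
    have h2c : ∀ k, 2 ≤ Function.update n K c k := fun k => by
      rcases eq_or_ne k K with rfl | hk
      · rwa [Function.update_self]
      · rw [Function.update_of_ne hk]; exact h2 k
    obtain ⟨hd₁, -⟩ := den_eq_and_num_eq_of_forall_lt hpre (K + 1) le_rfl
    obtain ⟨hd₀, -⟩ := den_eq_and_num_eq_of_forall_lt hpre K (by omega)
    rw [cyl, Real.volume_Icc, conv_sub_lower h2c, den_add_two, Function.update_self, ← hd₁, ← hd₀]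
    push_cast
    rfl
  have hab : (den n K : ℝ) < den n (K + 1) := by exact_mod_cast strictMono_den h2 (Nat.lt_add_one K)
  have hK' : (den n (K + 1) : ℝ) ≤ 3 * ((den n (K + 1) : ℝ) - den n K) := by exact_mod_cast hK
  have hm' : (2 : ℝ) ≤ m := by exact_mod_cast hm
  have hb : (0 : ℝ) ≤ den n K := by exact_mod_cast den_nonneg h2 K
  have hlen_nonneg (c : ℝ) (hc : 2 ≤ c) : 0 ≤ 1 / ((c * den n (K + 1) - den n K - den n (K + 1)) *
      (c * den n (K + 1) - den n K)) :=
    one_div_nonneg.mpr (mul_nonneg (by nlinarith) (by nlinarith))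
  calc volume (twoDigitSet m ∩ cyl n K)
      ≤ volume (cyl (Function.update n K m) (K + 1)) +
          volume (cyl (Function.update n K (m + 1)) (K + 1)) := by
        refine (measure_mono (twoDigitSet_inter_cyl_subset hm hn K)).trans ?_
        refine (measure_union_le _ _).trans ?_
        rw [(Set.countable_range _).measure_zero, add_zero]
        exact measure_union_le _ _
    _ ≤ ENNReal.ofReal (8 / 9 * (conv n K - lower n K)) := by
        rw [hlen m hm, hlen (m + 1) (by omega), ← ENNReal.ofReal_add (hlen_nonneg _ hm')
          (hlen_nonneg _ (by push_cast; linarith)), conv_sub_lower h2]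
        push_cast
        exact ENNReal.ofReal_le_ofReal (child_lengths_sum_le hb hab hK' hm')

lemma density_twoDigitSet_le {n : ℕ → ℤ} (hn : ∀ k, n k = m ∨ n k = m + 1) {x : ℝ}
    (hx : IsMinusCF x n) {K : ℕ} (hK : den n (K + 1) ≤ 3 * (den n (K + 1) - den n K)) :
    volume (twoDigitSet m ∩ Metric.closedBall x (conv n K - lower n K)) /
        volume (Metric.closedBall x (conv n K - lower n K)) ≤ ENNReal.ofReal (17 / 18) := by
  have h2 := two_le_of_forall_eq_or_eq hm hn
  set r := conv n K - lower n K
  have hr_pos : 0 < r := conv_sub_lower_pos h2 K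
  have hxK := mem_cyl_of_isMinusCF h2 hx K
  have hcyl_ball : cyl n K ⊆ Metric.closedBall x r := by
    rw [Real.closedBall_eq_Icc]
    exact Set.Icc_subset_Icc (by linarith [hxK.2]) (by linarith [hxK.1])
  have hcyl_vol : volume (cyl n K) = ENNReal.ofReal r := Real.volume_Icc
  have hrest : volume (Metric.closedBall x r \ cyl n K) = ENNReal.ofReal r := by
    rw [measure_sdiff hcyl_ball measurableSet_Icc.nullMeasurableSet (by simp [hcyl_vol]),
      Real.volume_closedBall, hcyl_vol, ← ENNReal.ofReal_sub _ hr_pos.le]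
    ring_nf
  have hnum : volume (twoDigitSet m ∩ Metric.closedBall x r) ≤ ENNReal.ofReal (17 / 9 * r) :=
    calc volume (twoDigitSet m ∩ Metric.closedBall x r)
        ≤ volume (twoDigitSet m ∩ cyl n K) + volume (Metric.closedBall x r \ cyl n K) := by
          refine (measure_mono fun y hy => ?_).trans (measure_union_le _ _)
          by_cases hy' : y ∈ cyl n K
          exacts [Or.inl ⟨hy.1, hy'⟩, Or.inr ⟨hy.2, hy'⟩]
      _ ≤ ENNReal.ofReal (8 / 9 * r) + ENNReal.ofReal r :=
          add_le_add (volume_twoDigitSet_inter_cyl_le hm hn hK) hrest.le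
      _ = ENNReal.ofReal (17 / 9 * r) := by
          rw [← ENNReal.ofReal_add (by positivity) hr_pos.le]
          ring_nf
  rw [Real.volume_closedBall]
  calc volume (twoDigitSet m ∩ Metric.closedBall x r) / ENNReal.ofReal (2 * r)
      ≤ ENNReal.ofReal (17 / 9 * r) / ENNReal.ofReal (2 * r) := ENNReal.div_le_div_right hnum _
    _ = ENNReal.ofReal (17 / 18) := by
        rw [← ENNReal.ofReal_div_of_pos (by positivity)]
        congr 1
        field_simp
        norm_num

lemma frequently_density_twoDigitSet_le {n : ℕ → ℤ} (hn : ∀ k, n k = m ∨ n k = m + 1) {x : ℝ}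
    (hx : IsMinusCF x n) (hfreq : ∃ᶠ k in atTop, n k = m + 1) :
    ∃ᶠ r in 𝓝[>] 0, volume (twoDigitSet m ∩ Metric.closedBall x r) /
        volume (Metric.closedBall x r) ≤ ENNReal.ofReal (17 / 18) := by
  have h2 := two_le_of_forall_eq_or_eq hm hn
  refine ((tendsto_conv_sub_lower h2).comp (tendsto_add_atTop_nat 1)).frequently
    (hfreq.mono fun k hk => density_twoDigitSet_le hm hn hx ?_)
  exact den_le_three_mul_den_sub_den h2 (by omega)

end TwoDigits

end MinusCF

theorem bounded_digits_measure_zero (m : ℤ) (hm : 2 ≤ m) :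
    volume {x : ℝ | x ∈ Set.Ico (-1 : ℝ) 0 ∧
      ∃ n : ℕ → ℤ, (∀ k, n k = m ∨ n k = m + 1) ∧ IsMinusCF x n} = 0 := by
  open MinusCF in
  set E := {x : ℝ | ∃ n ∈ {n : ℕ → ℤ | ∀ᶠ k in atTop, n k = m}, IsMinusCF x n}
  have hE : volume E = 0 :=
    (countable_setOf_isMinusCF (countable_setOf_eventually_eq m)).measure_zero _
  have hrest : volume (twoDigitSet m \ E) = 0 := by
    refine measure_eq_zero_of_frequently_density_le volume Set.sdiff_subset
      (ENNReal.ofReal_lt_one.mpr (by norm_num : (17 / 18 : ℝ) < 1)) ?_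
    rintro x ⟨⟨n, hn, hx⟩, hxE⟩
    refine frequently_density_twoDigitSet_le hm hn hx fun hev => hxE ⟨n, ?_, hx⟩
    exact hev.mono fun k hk => (hn k).resolve_right hk
  refine measure_mono_null (fun x hx => ?_) (measure_union_null hE hrest)
  by_cases hxE : x ∈ E
  exacts [Or.inl hxE, Or.inr ⟨hx.2, hxE⟩]
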